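/- arXiv:2009.03345 — 6 statements merged into one kernel-verified Lean document; each statement's English description precedes it below -/
import Mathlib

section
/- For every integer n ≥ 3 and real x > 0, Ψ_n(x) = Φ_n(−ω²)/ω^{φ(n)}, where ω = (x+√(x²+4))/2, Φ_n is the n-th cyclotomic polynomial, and φ is Euler's totient function. For n = 2, Ψ_2(x) = −Φ_2(−ω²)/ω. -/
/-
With `ω² = xω + 1` the other root of `X² - xX - 1` is `-ω⁻¹`, so Binet's formula gives
`(ω + ω⁻¹) F_n(x) = ω^n - (-ω⁻¹)^n`, i.e. `(-1)^n (ω + ω⁻¹) F_n(x) = ((-ω²)^n - 1) / ω^n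
= ∏_{d ∣ n} Φ_d(-ω²) / ω^{φ(d)}`. The factor `(-1)^n (ω + ω⁻¹)` is itself a product over the
divisors of `n`, of `-(ω + ω⁻¹)` at `d = 1` and `-1` at `d = 2`. Both sides being divisor
products of the same kind, Möbius uniqueness identifies `Ψ_d(x)` times these correction factors
with `Φ_d(-ω²) / ω^{φ(d)}`, which is nonzero since `-ω²` is not a root of unity.
-/

open Polynomial

/-- The Fibonacci polynomials: `F 1 = 1`, `F 2 = X`, `F (n+2) = X * F (n+1) + F n`. -/
noncomputable def fibPoly : ℕ → Polynomial ℤ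
  | 0 => 0
  | 1 => 1
  | n + 2 => X * fibPoly (n + 1) + fibPoly n

theorem eq_of_prod_divisors_eq {M : Type*} [CommMonoidWithZero M] [IsCancelMulZero M]
    {f g : ℕ → M} (hg : ∀ n, 0 < n → g n ≠ 0)
    (h : ∀ n, 0 < n → ∏ d ∈ n.divisors, f d = ∏ d ∈ n.divisors, g d) :
    ∀ n, 0 < n → f n = g n := by
  intro n
  induction n using Nat.strong_induction_on with
  | _ n ih =>
    intro hn
    have : Nontrivial M := ⟨⟨g 1, 0, hg 1 one_pos⟩⟩
    have hproper : ∏ d ∈ n.properDivisors, f d = ∏ d ∈ n.properDivisors, g d :=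
      Finset.prod_congr rfl fun d hd =>
        ih d (Nat.mem_properDivisors.1 hd).2 (Nat.pos_of_mem_properDivisors hd)
    have hne : ∏ d ∈ n.properDivisors, g d ≠ 0 :=
      Finset.prod_ne_zero_iff.2 fun d hd => hg d (Nat.pos_of_mem_properDivisors hd)
    have hn' := h n hn
    rw [← Nat.cons_self_properDivisors hn.ne', Finset.prod_cons, Finset.prod_cons, hproper] at hn'
    exact mul_right_cancel₀ hne hn'

theorem sub_mul_aeval_fibPoly {R : Type*} [CommRing R] {x ω β : R}
    (hω : ω ^ 2 = x * ω + 1) (hβ : β ^ 2 = x * β + 1) :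
    ∀ n, (ω - β) * aeval x (fibPoly n) = ω ^ n - β ^ n
  | 0 => by simp [fibPoly]
  | 1 => by simp [fibPoly]
  | n + 2 => by
    have h1 := sub_mul_aeval_fibPoly hω hβ (n + 1)
    have h0 := sub_mul_aeval_fibPoly hω hβ n
    simp only [fibPoly, map_add, map_mul, aeval_X]
    linear_combination x * h1 + h0 - ω ^ n * hω + β ^ n * hβ

theorem neg_one_pow_mul_aeval_fibPoly {K : Type*} [Field K] {x ω : K}
    (hω : ω ^ 2 = x * ω + 1) (n : ℕ) :
    (-1) ^ n * (ω + ω⁻¹) * aeval x (fibPoly n) = ((-ω ^ 2) ^ n - 1) / ω ^ n := by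
  have hω0 : ω ≠ 0 := by rintro rfl; simp at hω
  have hβ : (-ω⁻¹) ^ 2 = x * -ω⁻¹ + 1 := by field_simp; linear_combination -hω
  have binet := sub_mul_aeval_fibPoly hω hβ n
  rw [sub_neg_eq_add] at binet
  rw [mul_assoc, binet, neg_pow (ω ^ 2), neg_pow ω⁻¹, ← pow_mul, inv_pow]
  field_simp
  rcases n.even_or_odd with h | h <;> simp [h.neg_one_pow] <;> ring

theorem prod_divisors_cyclotomic_eval_div {K : Type*} [Field K] (y ω : K) {n : ℕ} (hn : 0 < n) :
    ∏ d ∈ n.divisors, (cyclotomic d K).eval y / ω ^ d.totient = (y ^ n - 1) / ω ^ n := by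
  rw [Finset.prod_div_distrib, ← eval_prod, prod_cyclotomic_eq_X_pow_sub_one hn,
    Finset.prod_pow_eq_pow_sum, Nat.sum_totient]
  simp

theorem cyclotomic_eval_ne_zero {K : Type*} [Field K] {y : K} {d : ℕ} (hy : y ^ d ≠ 1) :
    (cyclotomic d K).eval y ≠ 0 := by
  intro h
  obtain ⟨q, hq⟩ := cyclotomic.dvd_X_pow_sub_one d K
  apply hy
  have := congrArg (eval y) hq
  simp only [eval_sub, eval_pow, eval_X, eval_one, eval_mul, h, zero_mul] at this
  exact sub_eq_zero.1 this

def fibotomicTwist {R : Type*} [CommRing R] (t : R) (d : ℕ) : R :=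
  (if d = 1 then -t else 1) * (if d = 2 then -1 else 1)

theorem prod_divisors_fibotomicTwist {R : Type*} [CommRing R] (t : R) {n : ℕ} (hn : n ≠ 0) :
    ∏ d ∈ n.divisors, fibotomicTwist t d = (-1) ^ n * t := by
  simp only [fibotomicTwist, Finset.prod_mul_distrib, Finset.prod_ite_eq',
    Nat.mem_divisors, one_dvd, ne_eq, hn, not_false_eq_true, and_self, if_true]
  rcases n.even_or_odd with h | h
  · simp [h.two_dvd, h.neg_one_pow]
  · simp [h.neg_one_pow, ← even_iff_two_dvd, Nat.not_even_iff_odd.2 h]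

theorem aeval_mul_fibotomicTwist {K : Type*} [Field K] {Ψ : ℕ → ℤ[X]}
    (hΨ : ∀ n, 1 ≤ n → fibPoly n = ∏ d ∈ n.divisors, Ψ d) {x ω : K}
    (hω : ω ^ 2 = x * ω + 1) (hroot : ∀ d, 0 < d → (-ω ^ 2) ^ d ≠ 1) {n : ℕ} (hn : 0 < n) :
    aeval x (Ψ n) * fibotomicTwist (ω + ω⁻¹) n =
      (cyclotomic n K).eval (-ω ^ 2) / ω ^ n.totient := by
  have hω0 : ω ≠ 0 := by rintro rfl; simp at hω
  refine eq_of_prod_divisors_eq (f := fun d => aeval x (Ψ d) * fibotomicTwist (ω + ω⁻¹) d)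
    (g := fun d => (cyclotomic d K).eval (-ω ^ 2) / ω ^ d.totient)
    (fun d hd => div_ne_zero (cyclotomic_eval_ne_zero (hroot d hd)) (pow_ne_zero _ hω0))
    (fun m hm => ?_) n hn
  rw [prod_divisors_cyclotomic_eval_div _ _ hm, Finset.prod_mul_distrib,
    prod_divisors_fibotomicTwist _ hm.ne', ← map_prod, ← hΨ m hm,
    ← neg_one_pow_mul_aeval_fibPoly hω, mul_comm]

theorem neg_sq_pow_ne_one {ω : ℝ} (h : 1 < ω ^ 2) {d : ℕ} (hd : 0 < d) : (-ω ^ 2) ^ d ≠ 1 := by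
  intro h1
  have := congrArg abs h1
  rw [abs_pow, abs_neg, abs_of_pos (by positivity), abs_one] at this
  exact (one_lt_pow₀ h hd.ne').ne' this

theorem sq_eq_mul_add_one_and_one_lt_sq {x ω : ℝ} (hx : 0 < x)
    (hω : ω = (x + √(x ^ 2 + 4)) / 2) :
    ω ^ 2 = x * ω + 1 ∧ 1 < ω ^ 2 := by
  have hs : √(x ^ 2 + 4) ^ 2 = x ^ 2 + 4 := Real.sq_sqrt (by positivity)
  have hsq : ω ^ 2 = x * ω + 1 := by rw [hω]; linear_combination hs / 4
  refine ⟨hsq, ?_⟩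
  have : 0 < ω := by rw [hω]; positivity
  nlinarith

theorem fibotomic_eq_cyclotomic_general
    (Ψ : ℕ → Polynomial ℤ)
    (hΨprod : ∀ n, 1 ≤ n → fibPoly n = ∏ d ∈ n.divisors, Ψ d) :
    (∀ n : ℕ, 3 ≤ n → ∀ x : ℝ, 0 < x → ∀ ω : ℝ,
      ω = (x + Real.sqrt (x ^ 2 + 4)) / 2 →
      (Polynomial.aeval x (Ψ n) : ℝ) =
        (Polynomial.cyclotomic n ℝ).eval (-(ω ^ 2)) / ω ^ Nat.totient n) ∧
    (∀ x : ℝ, 0 < x → ∀ ω : ℝ,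
      ω = (x + Real.sqrt (x ^ 2 + 4)) / 2 →
      (Polynomial.aeval x (Ψ 2) : ℝ) =
        -((Polynomial.cyclotomic 2 ℝ).eval (-(ω ^ 2))) / ω) := by
  have key : ∀ x : ℝ, 0 < x → ∀ ω : ℝ, ω = (x + √(x ^ 2 + 4)) / 2 → ∀ n, 0 < n →
      aeval x (Ψ n) * fibotomicTwist (ω + ω⁻¹) n =
        (cyclotomic n ℝ).eval (-ω ^ 2) / ω ^ n.totient := by
    intro x hx ω hω n hn
    obtain ⟨hsq, hgt⟩ := sq_eq_mul_add_one_and_one_lt_sq hx hω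
    exact aeval_mul_fibotomicTwist hΨprod hsq (fun d => neg_sq_pow_ne_one hgt) hn
  refine ⟨fun n hn x hx ω hω => ?_, fun x hx ω hω => ?_⟩
  · simpa [fibotomicTwist, show n ≠ 1 by omega, show n ≠ 2 by omega] using
      key x hx ω hω n (by omega)
  · have := key x hx ω hω 2 two_pos
    simp only [fibotomicTwist, OfNat.ofNat_ne_one, ↓reduceIte, mul_neg, mul_one,
      Nat.totient_two, pow_one] at this
    rw [neg_div, ← this, neg_neg]

theorem fibotomic_eq_cyclotomic
    (Ψ : ℕ → Polynomial ℤ) (hΨ1 : Ψ 1 = 1)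
    (hΨmonic : ∀ n, 1 ≤ n → (Ψ n).Monic)
    (hΨprod : ∀ n, 1 ≤ n → fibPoly n = ∏ d ∈ n.divisors, Ψ d) :
    (∀ n : ℕ, 3 ≤ n → ∀ x : ℝ, 0 < x → ∀ ω : ℝ,
      ω = (x + Real.sqrt (x ^ 2 + 4)) / 2 →
      (Polynomial.aeval x (Ψ n) : ℝ) =
        (Polynomial.cyclotomic n ℝ).eval (-(ω ^ 2)) / ω ^ Nat.totient n) ∧
    (∀ x : ℝ, 0 < x → ∀ ω : ℝ,
      ω = (x + Real.sqrt (x ^ 2 + 4)) / 2 →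
      (Polynomial.aeval x (Ψ 2) : ℝ) =
        -((Polynomial.cyclotomic 2 ℝ).eval (-(ω ^ 2))) / ω) :=
  fibotomic_eq_cyclotomic_general Ψ hΨprod
end

section
/- Let p be an odd prime and m ≥ 2 an integer with p ∤ m. Then Ψ_{pm}(x) · Ψ_m(x) = Ψ_m(x·Ψ_{2p}(x)) as polynomials in ℤ[x]. -/
open Polynomial

/-!
For odd `k` the Fibonacci polynomials satisfy `F_{n+2k} = L_k F_{n+k} + F_n`, where
`L_k = F_{k+1} + F_{k-1}` is the Lucas polynomial; since `F_n(L_k)` obeys the same recurrence,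
`F_{kn} = F_k · F_n(L_k)`. For `p ∤ n` the divisors of `pn` are the `d` and the `pd` with
`d ∣ n`, so `∏_{d ∣ n} Ψ_{pd} Ψ_d = F_{pn} = Ψ_p ∏_{d ∣ n} Ψ_d(L_p)`. Induction over divisors,
cancelling the nonzero factors of the proper divisors, gives `Ψ_{pn} Ψ_n = Ψ_n(L_p)` for
`n > 1`. Finally `X F_p Ψ_{2p} = F_{2p} = F_p L_p`, so `X Ψ_{2p} = L_p`.
-/

open Finset

@[simp] lemma fibPoly_zero : fibPoly 0 = 0 := rfl

@[simp] lemma fibPoly_one : fibPoly 1 = 1 := rfl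

lemma fibPoly_add_two (n : ℕ) : fibPoly (n + 2) = X * fibPoly (n + 1) + fibPoly n := rfl

@[simp] lemma fibPoly_two : fibPoly 2 = X := by simp [fibPoly_add_two 0]

lemma fibPoly_add (m n : ℕ) :
    fibPoly (m + n + 1) = fibPoly (m + 1) * fibPoly (n + 1) + fibPoly m * fibPoly n := by
  induction m using Nat.twoStepInduction generalizing n with
  | zero => simp
  | one => rw [show 1 + n + 1 = n + 2 by omega, fibPoly_add_two n, fibPoly_two, fibPoly_one]; ring
  | more m ih ih1 =>
    rw [show m + 2 + 1 = m + 1 + 2 by omega, fibPoly_add_two (m + 1),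
      show m + 2 + n + 1 = m + n + 1 + 2 by omega, fibPoly_add_two (m + n + 1),
      show m + n + 1 + 1 = m + 1 + n + 1 by omega, ih1 n, ih n, fibPoly_add_two m]
    ring

lemma fibPoly_dOcagne (k n : ℕ) :
    fibPoly (k + 1) * fibPoly (n + k) - fibPoly k * fibPoly (n + k + 1) = (-1) ^ k * fibPoly n := by
  induction k with
  | zero => simp
  | succ k ih =>
    rw [fibPoly_add_two, ← add_assoc, fibPoly_add_two, pow_succ]
    linear_combination -ih

/-- The Lucas polynomial `L_k`; for `k = 0` truncated subtraction gives `1` instead of `L_0 = 2`. -/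
noncomputable def lucasPoly (k : ℕ) : ℤ[X] := fibPoly (k + 1) + fibPoly (k - 1)

lemma fibPoly_add_two_mul {k : ℕ} (hk : k ≠ 0) (n : ℕ) :
    fibPoly (n + 2 * k) = lucasPoly k * fibPoly (n + k) - (-1) ^ k * fibPoly n := by
  obtain ⟨q, rfl⟩ := Nat.exists_eq_add_one_of_ne_zero hk
  have hadd := fibPoly_add q (n + q + 1)
  have hdo := fibPoly_dOcagne (q + 1) n
  rw [show q + (n + q + 1) + 1 = n + 2 * (q + 1) by omega] at hadd
  rw [lucasPoly, Nat.add_sub_cancel, pow_succ]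
  linear_combination hadd - hdo

lemma fibPoly_mul_of_odd {k : ℕ} (hk : Odd k) (n : ℕ) :
    fibPoly (k * n) = fibPoly k * (fibPoly n).comp (lucasPoly k) := by
  induction n using Nat.twoStepInduction with
  | zero => simp
  | one => simp
  | more n ih ih1 =>
    rw [show k * (n + 2) = k * n + 2 * k by ring, fibPoly_add_two_mul hk.pos.ne',
      show k * n + k = k * (n + 1) by ring, ih, ih1, hk.neg_one_pow, fibPoly_add_two, add_comp,
      mul_comp, X_comp]
    ring

theorem Nat.eq_of_prod_divisors_eq {M : Type*} [CommMonoidWithZero M] [IsCancelMulZero M]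
    {S : ℕ → Prop} (hS : ∀ {n d}, S n → d ∣ n → S d) {a b : ℕ → M} (ha : ∀ n, n ≠ 0 → S n → a n ≠ 0)
    (hab : ∀ n, n ≠ 0 → S n → ∏ d ∈ n.divisors, a d = ∏ d ∈ n.divisors, b d) :
    ∀ n, n ≠ 0 → S n → a n = b n := by
  intro n
  induction n using Nat.strong_induction_on with
  | _ n ih =>
  intro hn hSn
  have := nontrivial_of_ne _ _ (ha n hn hSn)
  have hproper : ∏ d ∈ n.properDivisors, a d = ∏ d ∈ n.properDivisors, b d :=
    prod_congr rfl fun d hd ↦ by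
      obtain ⟨hdn, hlt⟩ := Nat.mem_properDivisors.1 hd
      exact ih d hlt (ne_zero_of_dvd_ne_zero hn hdn) (hS hSn hdn)
  have hne : ∏ d ∈ n.properDivisors, a d ≠ 0 := by
    rw [prod_ne_zero_iff]
    intro d hd
    obtain ⟨hdn, -⟩ := Nat.mem_properDivisors.1 hd
    exact ha d (ne_zero_of_dvd_ne_zero hn hdn) (hS hSn hdn)
  have := hab n hn hSn
  rw [← Nat.cons_self_properDivisors hn, prod_cons, prod_cons, hproper] at this
  exact mul_right_cancel₀ (hproper ▸ hne) this

theorem Nat.prod_divisors_prime_mul {M : Type*} [CommMonoid M] (f : ℕ → M) {p m : ℕ}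
    (hp : p.Prime) (hpm : ¬ p ∣ m) :
    ∏ d ∈ (p * m).divisors, f d = (∏ d ∈ m.divisors, f d) * ∏ d ∈ m.divisors, f (p * d) := by
  rw [Nat.divisors_mul, Finset.mul_def,
    prod_image (hp.coprime_iff_not_dvd.2 hpm).mul_injOn_divisors, prod_product, hp.prod_divisors]
  simp only [one_mul]
  exact mul_comm _ _

section Fibotomic

variable {Ψ : ℕ → ℤ[X]} (hΨ1 : Ψ 1 = 1)
  (hΨprod : ∀ n, 1 ≤ n → fibPoly n = ∏ d ∈ n.divisors, Ψ d)
include hΨprod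

include hΨ1 in
lemma fibotomic_prime_eq_fibPoly {p : ℕ} (hp : p.Prime) : Ψ p = fibPoly p := by
  rw [hΨprod p hp.one_lt.le, hp.prod_divisors, hΨ1, mul_one]

lemma fibPoly_prime_mul {p m : ℕ} (hp : p.Prime) (hm : m ≠ 0) (hpm : ¬ p ∣ m) :
    fibPoly (p * m) = fibPoly m * ∏ d ∈ m.divisors, Ψ (p * d) := by
  rw [hΨprod _ (Nat.one_le_iff_ne_zero.2 (mul_ne_zero hp.ne_zero hm)),
    Nat.prod_divisors_prime_mul Ψ hp hpm, hΨprod m (Nat.one_le_iff_ne_zero.2 hm)]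

include hΨ1

lemma X_mul_fibotomic_two_mul_eq_lucasPoly {p : ℕ} (hp : p.Prime) (hodd : Odd p)
    (hΨp : Ψ p ≠ 0) : X * Ψ (2 * p) = lucasPoly p := by
  have h2p : ¬ 2 ∣ p := hodd.not_two_dvd_nat
  have hΨ2 : Ψ 2 = X := by rw [fibotomic_prime_eq_fibPoly hΨ1 hΨprod Nat.prime_two, fibPoly_two]
  have hfib := fibPoly_mul_of_odd hodd 2
  rw [mul_comm p 2, fibPoly_prime_mul hΨprod Nat.prime_two hp.ne_zero h2p, hp.prod_divisors,
    mul_one, hΨ2, fibPoly_two, X_comp, ← fibotomic_prime_eq_fibPoly hΨ1 hΨprod hp,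
    mul_comm _ X] at hfib
  exact mul_left_cancel₀ hΨp hfib

lemma fibotomic_prime_mul_mul_eq_comp_lucasPoly {p m : ℕ} (hp : p.Prime) (hodd : Odd p)
    (hΨne : ∀ n, n ≠ 0 → Ψ n ≠ 0) (hm : 2 ≤ m) (hpm : ¬ p ∣ m) :
    Ψ (p * m) * Ψ m = (Ψ m).comp (lucasPoly p) := by
  -- The extra factor `Ψ p` at `d = 1` is the `fibPoly p` in `F_{pn} = F_p F_n(L_p)`.
  have hprod (n : ℕ) (hn : n ≠ 0) (hpn : ¬ p ∣ n) :
      ∏ d ∈ n.divisors, Ψ (p * d) * Ψ d =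
        ∏ d ∈ n.divisors, (if d = 1 then Ψ p else 1) * (Ψ d).comp (lucasPoly p) := by
    rw [prod_mul_distrib, prod_mul_distrib, prod_ite_eq', if_pos (Nat.one_mem_divisors.2 hn),
      ← Polynomial.prod_comp, ← hΨprod n (Nat.one_le_iff_ne_zero.2 hn), mul_comm,
      ← fibPoly_prime_mul hΨprod hp hn hpn, fibotomic_prime_eq_fibPoly hΨ1 hΨprod hp,
      fibPoly_mul_of_odd hodd]
  have key := Nat.eq_of_prod_divisors_eq (S := fun n ↦ ¬ p ∣ n)
    (fun hpn hdn hpd ↦ hpn (hpd.trans hdn))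
    (fun n hn _ ↦ mul_ne_zero (hΨne _ (mul_ne_zero hp.ne_zero hn)) (hΨne n hn)) hprod
    m (by omega) hpm
  simpa [show m ≠ 1 by omega] using key

end Fibotomic

theorem fibotomic_pm_not_dvd
    (Ψ : ℕ → Polynomial ℤ) (hΨ1 : Ψ 1 = 1)
    (hΨmonic : ∀ n, 1 ≤ n → (Ψ n).Monic)
    (hΨprod : ∀ n, 1 ≤ n → fibPoly n = ∏ d ∈ n.divisors, Ψ d)
    (p m : ℕ) (hp : p.Prime) (hp2 : p ≠ 2) (hm : 2 ≤ m) (hpm : ¬ p ∣ m) :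
    Ψ (p * m) * Ψ m = (Ψ m).comp (X * Ψ (2 * p)) := by
  have hodd : Odd p := hp.odd_of_ne_two hp2
  have hΨne : ∀ n, n ≠ 0 → Ψ n ≠ 0 := fun n hn ↦
    (hΨmonic n (Nat.one_le_iff_ne_zero.2 hn)).ne_zero
  rw [X_mul_fibotomic_two_mul_eq_lucasPoly hΨ1 hΨprod hp hodd (hΨne p hp.ne_zero)]
  exact fibotomic_prime_mul_mul_eq_comp_lucasPoly hΨ1 hΨprod hp hodd hΨne hm hpm
end

section
/- For every integer n ≥ 2, the product ∏_{1≤s≤n−1, gcd(s,n)=1} sin(sπ/n) equals p/2^{φ(n)} if n = p^α is a prime power, and equals 1/2^{φ(n)} otherwise. -/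
/-!
With `ζ = exp (2πi/n)`, the primitive `n`-th roots of unity are the `ζ ^ s` with `s` coprime to
`n`, so `Φₙ(1) = ∏ (1 - ζ ^ s)`, and `|1 - ζ ^ s| = 2 sin (sπ/n)`. Hence the product of the sines
is `|Φₙ(1)| / 2 ^ φ(n)`, and `Φₙ(1)` is `p` when `n = p ^ α` and `1` for any other `n ≥ 2`.
-/

open Real Complex Polynomial Finset

namespace IsPrimitiveRoot

variable {R : Type*} [CommRing R] [IsDomain R] [DecidableEq R] {ζ : R} {k : ℕ}

theorem primitiveRoots_eq_image (h : IsPrimitiveRoot ζ k) (hk : 0 < k) :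
    primitiveRoots k R = {i ∈ range k | i.Coprime k}.image (ζ ^ ·) := by
  have : NeZero k := ⟨hk.ne'⟩
  ext ξ
  simp [mem_primitiveRoots hk, h.isPrimitiveRoot_iff, and_assoc]

theorem eval_cyclotomic_eq_prod (h : IsPrimitiveRoot ζ k) (hk : 0 < k) (x : R) :
    eval x (cyclotomic k R) = ∏ i ∈ range k with i.Coprime k, (x - ζ ^ i) := by
  rw [cyclotomic_eq_prod_X_sub_primitiveRoots h, eval_prod, h.primitiveRoots_eq_image hk,
    prod_image fun i hi j hj ↦ h.pow_inj (by simp_all) (by simp_all)]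
  simp

end IsPrimitiveRoot

theorem Complex.norm_one_sub_exp_mul_I {θ : ℝ} (h₀ : 0 ≤ θ) (h₁ : θ ≤ 2 * π) :
    ‖1 - exp (θ * I)‖ = 2 * Real.sin (θ / 2) := by
  rw [norm_sub_rev, mul_comm, norm_exp_I_mul_ofReal_sub_one, Real.norm_of_nonneg]
  exact mul_nonneg two_pos.le (sin_nonneg_of_nonneg_of_le_pi (by linarith) (by linarith))

theorem Complex.norm_one_sub_exp_two_pi_I_div_pow {n s : ℕ} (hs : s ≤ n) :
    ‖1 - exp (2 * π * I / n) ^ s‖ = 2 * Real.sin (s * π / n) := by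
  rcases n.eq_zero_or_pos with rfl | hn
  · simp_all
  have hθ : (2 * π * s / n : ℝ) ≤ 2 * π := by
    rw [div_le_iff₀ (by positivity)]
    gcongr
  have hpow : exp (2 * π * I / n) ^ s = exp ((2 * π * s / n : ℝ) * I) := by
    rw [← exp_nat_mul]; push_cast; ring_nf
  rw [hpow, norm_one_sub_exp_mul_I (by positivity) hθ]
  ring_nf

theorem prod_sin_coprime_eq_norm_eval_one_cyclotomic_div {n : ℕ} (hn : 0 < n) :
    ∏ s ∈ range n with s.Coprime n, Real.sin (s * π / n) =
      ‖eval 1 (cyclotomic n ℂ)‖ / 2 ^ Nat.totient n := by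
  have hcard : #{s ∈ range n | s.Coprime n} = Nat.totient n := by
    rw [Nat.totient_eq_card_coprime]
    simp_rw [Nat.coprime_comm]
  rw [eq_div_iff (by positivity), (isPrimitiveRoot_exp n hn.ne').eval_cyclotomic_eq_prod hn,
    norm_prod, ← hcard, mul_comm, ← prod_const, ← prod_mul_distrib]
  refine prod_congr rfl fun s hs ↦ ?_
  rw [norm_one_sub_exp_two_pi_I_div_pow (mem_range.1 (mem_filter.1 hs).1).le]

theorem prod_sin_coprime (n : ℕ) (hn : 2 ≤ n) :
    (∀ p α : ℕ, p.Prime → 0 < α → n = p ^ α →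
      ∏ s ∈ (Finset.range n).filter (fun s => Nat.gcd s n = 1),
        Real.sin (s * Real.pi / n) = p / 2 ^ Nat.totient n) ∧
    ((¬∃ p α : ℕ, p.Prime ∧ 0 < α ∧ n = p ^ α) →
      ∏ s ∈ (Finset.range n).filter (fun s => Nat.gcd s n = 1),
        Real.sin (s * Real.pi / n) = 1 / 2 ^ Nat.totient n) := by
  have hprod := prod_sin_coprime_eq_norm_eval_one_cyclotomic_div (n := n) (by omega)
  simp only [Nat.Coprime] at hprod
  refine ⟨fun p α hp hα hpα ↦ ?_, fun hnot ↦ ?_⟩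
  · have : Fact p.Prime := ⟨hp⟩
    obtain ⟨k, rfl⟩ : ∃ k, α = k + 1 := ⟨α - 1, by omega⟩
    rw [hprod, hpα, eval_one_cyclotomic_prime_pow, Complex.norm_natCast]
  · have hcyc : eval 1 (cyclotomic n ℂ) = 1 := by
      refine eval_one_cyclotomic_not_prime_pow fun {p} hp k hpk ↦ hnot ⟨p, k, hp, ?_, hpk.symm⟩
      exact Nat.pos_of_ne_zero fun hk ↦ by simp only [hk, pow_zero] at hpk; omega
    rw [hprod, hcyc, norm_one]
end

section
/- Let p be a prime, m ≥ 2 an integer with gcd(p,m)=1, and k a nonnegative integer. Then in (ℤ/pℤ)[x], Ψ_{p^k m}(x) ≡ Ψ_m(x)^{φ(p^k)} (mod p). -/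
open Polynomial

/-!
Modulo `p` the Fibonacci polynomials satisfy `F (p * n) = F n ^ p * F p`: for `Q = !![X, 1; 1, 0]`
one has `Q ^ n = F n • Q + F (n - 1) • 1`, and the `p`-th power is additive on commuting matrices
in characteristic `p`. Writing `F n = ∏ d ∣ n, Ψ d` and comparing `F (p ^ (k + 1) * m)` with
`F (p ^ k * m)` yields `∏ e ∣ m, Ψ (p ^ (k + 1) * e) = (F m ^ (p - 1) * F p) ^ p ^ k` for every `m`
prime to `p`. The candidates `Ψ e ^ φ (p ^ (k + 1))` for `e > 1` and `Ψ p ^ p ^ k` for `e = 1`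
satisfy the same divisor-product identities, so they agree with `Ψ (p ^ (k + 1) * e)` by strong
induction over the divisors of `m`, cancelling in the domain `(ZMod p)[X]`.
-/

open Finset

theorem Nat.Coprime.prod_divisors_mul {M : Type*} [CommMonoid M] {m n : ℕ} (hmn : m.Coprime n)
    (f : ℕ → M) :
    ∏ d ∈ (m * n).divisors, f d = ∏ a ∈ m.divisors, ∏ b ∈ n.divisors, f (a * b) := by
  rw [hmn.divisors_mul, prod_map]
  exact (prod_attach _ fun x => f (x.1 * x.2)).trans (prod_product _ _ _)

theorem Nat.prod_divisors_prime_pow_mul {M : Type*} [CommMonoid M] {p m : ℕ} (hp : p.Prime)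
    (hpm : p.Coprime m) (k : ℕ) (f : ℕ → M) :
    ∏ d ∈ (p ^ k * m).divisors, f d = ∏ i ∈ range (k + 1), ∏ e ∈ m.divisors, f (p ^ i * e) := by
  rw [(hpm.pow_left k).prod_divisors_mul, Nat.prod_divisors_prime_pow hp]

theorem eq_of_forall_dvd_prod_divisors_eq {M : Type*} [CommMonoidWithZero M] [IsCancelMulZero M]
    [Nontrivial M] {g h : ℕ → M} {n : ℕ} (hn : n ≠ 0) (hh : ∀ d, d ∣ n → h d ≠ 0)
    (H : ∀ d, d ∣ n → ∏ e ∈ d.divisors, g e = ∏ e ∈ d.divisors, h e) : g n = h n := by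
  induction n using Nat.strong_induction_on with
  | _ n ih =>
  have hproper : ∀ d ∈ n.properDivisors, g d = h d := fun d hd => by
    obtain ⟨hdn, hlt⟩ := Nat.mem_properDivisors.1 hd
    exact ih d hlt (Nat.pos_of_dvd_of_pos hdn (Nat.pos_of_ne_zero hn)).ne'
      (fun e he => hh e (he.trans hdn)) (fun e he => H e (he.trans hdn))
  have hprod := H n dvd_rfl
  rw [← Nat.cons_self_properDivisors hn, prod_cons, prod_cons, prod_congr rfl hproper] at hprod
  exact mul_right_cancel₀ (prod_ne_zero_iff.2 fun d hd => hh d (Nat.mem_properDivisors.1 hd).1)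
    hprod

theorem apply_prime_pow_mul_pow_sub_one_mul {M : Type*} [CommMonoid M] {f : ℕ → M} {p : ℕ}
    (hp : p ≠ 0) (hfp : ∀ n, n ≠ 0 → f (p * n) = f n ^ p * f p) {n : ℕ} (hn : n ≠ 0) (k : ℕ) :
    f (p ^ k * n) ^ (p - 1) * f p = (f n ^ (p - 1) * f p) ^ p ^ k := by
  induction k with
  | zero => simp
  | succ k ih =>
    calc f (p ^ (k + 1) * n) ^ (p - 1) * f p
        = (f (p ^ k * n) ^ p * f p) ^ (p - 1) * f p := by
          rw [pow_succ', mul_assoc, hfp _ (mul_ne_zero (pow_ne_zero _ hp) hn)]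
      _ = (f (p ^ k * n) ^ (p - 1) * f p) ^ p := by
          rw [mul_pow, ← pow_mul, mul_comm p, pow_mul, mul_assoc, ← pow_succ,
            Nat.sub_add_cancel (Nat.one_le_iff_ne_zero.2 hp), mul_pow]
      _ = (f n ^ (p - 1) * f p) ^ p ^ (k + 1) := by rw [ih, ← pow_mul, pow_succ]

section DivisorProducts

variable {M : Type*} [CommMonoidWithZero M] [IsCancelMulZero M] [Nontrivial M] {f ψ : ℕ → M}
  {p : ℕ}

theorem prod_divisors_apply_prime_pow_succ_mul (hp : p.Prime) (hψ : ∀ n, n ≠ 0 → ψ n ≠ 0)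
    (hf : ∀ n, n ≠ 0 → f n = ∏ d ∈ n.divisors, ψ d)
    (hfp : ∀ n, n ≠ 0 → f (p * n) = f n ^ p * f p) {m : ℕ} (hpm : p.Coprime m) (k : ℕ) :
    ∏ e ∈ m.divisors, ψ (p ^ (k + 1) * e) = (f m ^ (p - 1) * f p) ^ p ^ k := by
  have hm : m ≠ 0 := fun h => hp.ne_one ((Nat.coprime_zero_right p).1 (h ▸ hpm))
  have hk : p ^ k * m ≠ 0 := mul_ne_zero (pow_ne_zero _ hp.ne_zero) hm
  have hfk : f (p ^ k * m) ≠ 0 := by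
    rw [hf _ hk]
    exact prod_ne_zero_iff.2 fun d hd => hψ d (Nat.pos_of_mem_divisors hd).ne'
  apply mul_left_cancel₀ hfk
  calc f (p ^ k * m) * ∏ e ∈ m.divisors, ψ (p ^ (k + 1) * e)
      = f (p ^ (k + 1) * m) := by
        rw [hf _ hk, hf _ (mul_ne_zero (pow_ne_zero _ hp.ne_zero) hm),
          Nat.prod_divisors_prime_pow_mul hp hpm, Nat.prod_divisors_prime_pow_mul hp hpm,
          prod_range_succ _ (k + 1)]
    _ = f (p ^ k * m) * (f (p ^ k * m) ^ (p - 1) * f p) := by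
        rw [pow_succ', mul_assoc, hfp _ hk, ← mul_assoc, ← pow_succ',
          Nat.sub_add_cancel hp.one_le]
    _ = f (p ^ k * m) * (f m ^ (p - 1) * f p) ^ p ^ k := by
        rw [apply_prime_pow_mul_pow_sub_one_mul hp.ne_zero hfp hm]

theorem apply_prime_pow_mul_eq_pow_totient (hp : p.Prime) (hψ : ∀ n, n ≠ 0 → ψ n ≠ 0)
    (hf : ∀ n, n ≠ 0 → f n = ∏ d ∈ n.divisors, ψ d)
    (hfp : ∀ n, n ≠ 0 → f (p * n) = f n ^ p * f p) (hψ1 : ψ 1 = 1) {m : ℕ} (hm : 1 < m)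
    (hpm : p.Coprime m) (k : ℕ) : ψ (p ^ k * m) = ψ m ^ (p ^ k).totient := by
  obtain _ | k := k
  · simp
  -- at `e = 1` the candidate is the value `ψ (p ^ (k + 1)) = ψ p ^ p ^ k` forced by `m = 1`
  let χ : ℕ → M := fun e => ψ e ^ (p ^ (k + 1)).totient * if e = 1 then ψ p ^ p ^ k else 1
  suffices ψ (p ^ (k + 1) * m) = χ m by simpa [χ, hm.ne'] using this
  refine eq_of_forall_dvd_prod_divisors_eq (g := fun e => ψ (p ^ (k + 1) * e)) (by omega)
    (fun d hd => ?_) fun d hd => ?_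
  · have hd0 : d ≠ 0 := ne_zero_of_dvd_ne_zero (by omega) hd
    refine mul_ne_zero (pow_ne_zero _ (hψ d hd0)) ?_
    split_ifs
    exacts [pow_ne_zero _ (hψ p hp.ne_zero), one_ne_zero]
  · have hd0 : d ≠ 0 := ne_zero_of_dvd_ne_zero (by omega) hd
    have hf_prime : f p = ψ p := by rw [hf p hp.ne_zero, hp.prod_divisors, hψ1, mul_one]
    rw [prod_divisors_apply_prime_pow_succ_mul hp hψ hf hfp (hpm.coprime_dvd_right hd),
      prod_mul_distrib, prod_pow, ← hf d hd0, prod_ite_eq', if_pos (Nat.one_mem_divisors.2 hd0),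
      Nat.totient_prime_pow_succ hp, hf_prime, mul_pow, ← pow_mul, mul_comm (p - 1)]

end DivisorProducts

section FibonacciMatrix

variable (R : Type*) [CommRing R]

noncomputable def fibonacciMatrix : Matrix (Fin 2) (Fin 2) R[X] := !![X, 1; 1, 0]

variable {R}

theorem fibPoly_map_add_two (n : ℕ) :
    (fibPoly (n + 2)).map (Int.castRingHom R) =
      X * (fibPoly (n + 1)).map (Int.castRingHom R) + (fibPoly n).map (Int.castRingHom R) := by
  simp [fibPoly]

theorem fibonacciMatrix_pow {n : ℕ} (hn : n ≠ 0) :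
    fibonacciMatrix R ^ n = (fibPoly n).map (Int.castRingHom R) • fibonacciMatrix R +
      (fibPoly (n - 1)).map (Int.castRingHom R) • 1 := by
  have hQ : fibonacciMatrix R * fibonacciMatrix R = (X : R[X]) • fibonacciMatrix R + 1 := by
    ext i j; fin_cases i <;> fin_cases j <;> simp [fibonacciMatrix]
  obtain ⟨n, rfl⟩ := Nat.exists_eq_add_one_of_ne_zero hn
  induction n with
  | zero => simp [fibPoly]
  | succ n ih =>
    rw [pow_succ, ih n.succ_ne_zero, add_mul, smul_mul_assoc, hQ, smul_mul_assoc, one_mul,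
      Nat.add_sub_cancel, Nat.add_sub_cancel, fibPoly_map_add_two]
    module

/-- `Q ^ (p * n) = (F n • Q + F (n - 1) • 1) ^ p = F n ^ p • Q ^ p + F (n - 1) ^ p • 1`, since
the two summands commute and we are in characteristic `p`; now compare the `(0, 1)` entries. -/
theorem fibPoly_map_prime_mul (p : ℕ) [hp : Fact p.Prime] [CharP R p] {n : ℕ} (hn : n ≠ 0) :
    (fibPoly (p * n)).map (Int.castRingHom R) =
      (fibPoly n).map (Int.castRingHom R) ^ p * (fibPoly p).map (Int.castRingHom R) := by
  have key : fibonacciMatrix R ^ (p * n) =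
      (fibPoly n).map (Int.castRingHom R) ^ p • fibonacciMatrix R ^ p +
        (fibPoly (n - 1)).map (Int.castRingHom R) ^ p • 1 := by
    rw [mul_comm, pow_mul, fibonacciMatrix_pow hn,
      add_pow_char_of_commute (p := p) (h := (Commute.one_right _).smul_right _ |>.smul_left _),
      _root_.smul_pow, _root_.smul_pow, one_pow]
  rw [fibonacciMatrix_pow (mul_ne_zero hp.out.ne_zero hn),
    fibonacciMatrix_pow hp.out.ne_zero] at key
  simpa [fibonacciMatrix] using congrFun (congrFun key 0) 1

end FibonacciMatrix

theorem fibotomic_prime_pow_mul_mod_p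
    (Ψ : ℕ → Polynomial ℤ) (hΨ1 : Ψ 1 = 1)
    (hΨmonic : ∀ n, 1 ≤ n → (Ψ n).Monic)
    (hΨprod : ∀ n, 1 ≤ n → fibPoly n = ∏ d ∈ n.divisors, Ψ d)
    (p m k : ℕ) (hp : p.Prime) (hm : 2 ≤ m) (hgcd : Nat.gcd p m = 1) :
    (Ψ (p ^ k * m)).map (Int.castRingHom (ZMod p)) =
      ((Ψ m).map (Int.castRingHom (ZMod p))) ^ Nat.totient (p ^ k) := by
  have := Fact.mk hp
  refine apply_prime_pow_mul_eq_pow_totient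
    (f := fun n => (fibPoly n).map (Int.castRingHom (ZMod p)))
    hp (fun n hn => ((hΨmonic n (by omega)).map _).ne_zero) (fun n hn => ?_)
    (fun n hn => fibPoly_map_prime_mul p hn) (by simp [hΨ1]) hm hgcd k
  rw [hΨprod n (by omega), Polynomial.map_prod]
end

section
/- Let m ≥ 3 be an odd integer, let ζ be a primitive m-th root of unity in an algebraic closure of 𝔽_2, let u' be the multiplicative order of 2 modulo m, and let s be coprime to m. Then the degree of the minimal polynomial of ζ^s + ζ^{−s} over 𝔽_2 is u'/2 if u' is even and 2^{u'/2} ≡ −1 (mod m), and is u' otherwise. -/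
/-!
Over a finite field `F` with `q` elements, the degree of the minimal polynomial of `α` is the
order of Frobenius on `F⟮α⟯`: it divides `d` iff `α ^ q ^ d = α`. For `α = ξ + ξ⁻¹` with
`ξ = ζ ^ s` again a primitive `m`-th root of unity, `α ^ q ^ d = ξ ^ q ^ d + (ξ ^ q ^ d)⁻¹`,
which equals `α` iff `ξ ^ q ^ d = ξ ^ (±1)`, i.e. `q ^ d ≡ ±1 (mod m)`. So the degree is the
order of `q` in `(ℤ/mℤ)ˣ / {±1}`: half the order `u'` of `q` when `q ^ (u'/2) ≡ -1`, and
`u'` otherwise.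
-/

open IntermediateField

theorem orderOf_eq_of_isLeast {M : Type*} [Monoid M] {g : M} {u : ℕ}
    (h : IsLeast {k : ℕ | 0 < k ∧ g ^ k = 1} u) : orderOf g = u :=
  (orderOf_eq_iff h.1.1).mpr
    ⟨h.1.2, fun _ hk hpos hone => (h.2 ⟨hpos, hone⟩).not_gt hk⟩

theorem add_inv_eq_add_inv_iff {K : Type*} [Field K] {x y : K} (hx : x ≠ 0) (hy : y ≠ 0) :
    x + x⁻¹ = y + y⁻¹ ↔ x = y ∨ x = y⁻¹ := by
  have key : (x - y) * (x - y⁻¹) = x * ((x + x⁻¹) - (y + y⁻¹)) := by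
    field_simp
    ring
  rw [← sub_eq_zero, ← mul_right_inj' hx, ← key, mul_zero, mul_eq_zero, sub_eq_zero,
    sub_eq_zero]

theorem IsPrimitiveRoot.zpow_eq_zpow_iff {G₀ : Type*} [CommGroupWithZero G₀] {ξ : G₀} {m : ℕ}
    (h : IsPrimitiveRoot ξ m) (hm : m ≠ 0) (a b : ℤ) :
    ξ ^ a = ξ ^ b ↔ (a : ZMod m) = b := by
  rw [ZMod.intCast_eq_intCast_iff_dvd_sub, ← h.zpow_eq_one_iff_dvd, zpow_sub₀ (h.ne_zero hm),
    div_eq_one_iff_eq (zpow_ne_zero _ (h.ne_zero hm)), eq_comm]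

theorem IsPrimitiveRoot.pow_add_inv_pow_eq_add_inv_iff {K : Type*} [Field K] {ξ : K} {m : ℕ}
    (h : IsPrimitiveRoot ξ m) (hm : m ≠ 0) (k : ℕ) :
    ξ ^ k + (ξ ^ k)⁻¹ = ξ + ξ⁻¹ ↔ (k : ZMod m) = 1 ∨ (k : ZMod m) = -1 := by
  have hself := h.zpow_eq_zpow_iff hm k 1
  have hinv := h.zpow_eq_zpow_iff hm k (-1)
  simp only [zpow_natCast, zpow_one, zpow_neg_one, Int.cast_natCast, Int.cast_one,
    Int.cast_neg] at hself hinv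
  rw [add_inv_eq_add_inv_iff (pow_ne_zero _ (h.ne_zero hm)) (h.ne_zero hm), hself, hinv]

theorem FiniteField.pow_card_pow_eq_self_iff {F K : Type*} [Field F] [Fintype F] [Field K]
    [Algebra F K] {α : K} (hα : IsIntegral F α) (d : ℕ) :
    α ^ Fintype.card F ^ d = α ↔ (minpoly F α).natDegree ∣ d := by
  have : FiniteDimensional F F⟮α⟯ := adjoin.finiteDimensional hα
  have : Finite F⟮α⟯ := Module.finite_of_finite F
  rw [← adjoin.finrank hα, ← orderOf_frobeniusAlgHom F F⟮α⟯, orderOf_dvd_iff_pow_eq_one]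
  have hgen (f : F⟮α⟯ →ₐ[F] F⟮α⟯) :
      f = 1 ↔ f (AdjoinSimple.gen F α) = AdjoinSimple.gen F α :=
    ⟨fun hf => hf ▸ rfl, fun hf => (adjoin.powerBasis hα).algHom_ext hf⟩
  rw [hgen, AlgHom.coe_pow, coe_frobeniusAlgHom, pow_iterate, ← Subtype.val_inj]
  rfl

theorem FiniteField.add_pow_card_pow {F K : Type*} [Field F] [Fintype F] [CommRing K]
    [Algebra F K] (x y : K) (d : ℕ) :
    (x + y) ^ Fintype.card F ^ d = x ^ Fintype.card F ^ d + y ^ Fintype.card F ^ d := by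
  simpa only [AlgHom.coe_pow, coe_frobeniusAlgHom, pow_iterate] using
    map_add (frobeniusAlgHom F K ^ d) x y

theorem IsPrimitiveRoot.natDegree_minpoly_add_inv_dvd_iff {F K : Type*} [Field F] [Fintype F]
    [Field K] [Algebra F K] {ξ : K} {m : ℕ} (h : IsPrimitiveRoot ξ m) (hm : m ≠ 0) (d : ℕ) :
    (minpoly F (ξ + ξ⁻¹)).natDegree ∣ d ↔
      (Fintype.card F : ZMod m) ^ d = 1 ∨ (Fintype.card F : ZMod m) ^ d = -1 := by
  have hint {η : K} (hη : IsPrimitiveRoot η m) : IsIntegral F η :=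
    .of_pow (Nat.pos_of_ne_zero hm) (hη.pow_eq_one ▸ isIntegral_one)
  rw [← FiniteField.pow_card_pow_eq_self_iff ((hint h).add (hint h.inv)),
    FiniteField.add_pow_card_pow, inv_pow, h.pow_add_inv_pow_eq_add_inv_iff hm, Nat.cast_pow]

open Classical in
theorem eq_ite_of_dvd_iff_pow_eq_one_or_neg_one {M : Type*} [Monoid M] [HasDistribNeg M]
    {g : M}
    (hg : IsOfFinOrder g) {n : ℕ} (hn : ∀ d, n ∣ d ↔ g ^ d = 1 ∨ g ^ d = -1) :
    n = if Even (orderOf g) ∧ g ^ (orderOf g / 2) = -1 then orderOf g / 2 else orderOf g := by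
  set u := orderOf g
  have hu_pos : 0 < u := hg.orderOf_pos
  have hn_dvd : n ∣ u := (hn u).mpr (.inl (pow_orderOf_eq_one g))
  have hn_pos : 0 < n := Nat.pos_of_dvd_of_pos hn_dvd hu_pos
  have hu_dvd : u ∣ n * 2 := by
    refine orderOf_dvd_of_pow_eq_one ?_
    rcases (hn n).mp dvd_rfl with h | h <;> simp [pow_mul, h]
  obtain ⟨c, hc⟩ := hn_dvd
  rw [hc] at hu_dvd
  -- `n ∣ u ∣ 2 * n`, so `u = n` or `u = 2 * n`
  rcases (Nat.dvd_prime Nat.prime_two).mp (Nat.dvd_of_mul_dvd_mul_left hn_pos hu_dvd) with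
    rfl | rfl
  · rw [if_neg]
    · omega
    rintro ⟨⟨k, hk⟩, hneg⟩
    have hle : n ≤ u / 2 := Nat.le_of_dvd (by omega) ((hn _).mpr (.inr hneg))
    omega
  · have hneg : g ^ n = -1 :=
      ((hn n).mp dvd_rfl).resolve_left (pow_ne_one_of_lt_orderOf hn_pos.ne' (by omega))
    have hhalf : u / 2 = n := by omega
    rw [if_pos ⟨⟨n, by omega⟩, hhalf ▸ hneg⟩, hhalf]

theorem minpoly_degree_char_two_general
    (m : ℕ)
    (ζ : AlgebraicClosure (ZMod 2)) (hζ : IsPrimitiveRoot ζ m)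
    (u' : ℕ) (hu' : IsLeast {k : ℕ | 0 < k ∧ 2 ^ k ≡ 1 [MOD m]} u')
    (s : ℕ) (hsm : Nat.gcd s m = 1) :
    (Even u' ∧ (2 : ℤ) ^ (u' / 2) ≡ -1 [ZMOD (m : ℕ)] →
      (minpoly (ZMod 2) (ζ ^ s + ζ⁻¹ ^ s)).natDegree = u' / 2) ∧
    (¬(Even u' ∧ (2 : ℤ) ^ (u' / 2) ≡ -1 [ZMOD (m : ℕ)]) →
      (minpoly (ZMod 2) (ζ ^ s + ζ⁻¹ ^ s)).natDegree = u') := by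
  have hm : m ≠ 0 := by
    rintro rfl
    obtain ⟨hpos, hone⟩ := hu'.1
    rw [Nat.modEq_zero_iff, Nat.pow_eq_one] at hone
    omega
  have horder : orderOf (2 : ZMod m) = u' := orderOf_eq_of_isLeast <| by
    simpa only [← ZMod.natCast_eq_natCast_iff, Nat.cast_pow, Nat.cast_ofNat, Nat.cast_one]
      using hu'
  have hdeg := eq_ite_of_dvd_iff_pow_eq_one_or_neg_one
    (orderOf_pos_iff.mp (horder ▸ hu'.1.1)) fun d => by
      simpa using (hζ.pow_of_coprime s hsm).natDegree_minpoly_add_inv_dvd_iff (F := ZMod 2) hm d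
  have hcond : (2 : ℤ) ^ (u' / 2) ≡ -1 [ZMOD m] ↔ (2 : ZMod m) ^ (u' / 2) = -1 := by
    rw [← ZMod.intCast_eq_intCast_iff]
    push_cast
    rfl
  rw [hcond, inv_pow, hdeg, horder]
  exact ⟨fun h => if_pos h, fun h => if_neg h⟩

theorem minpoly_degree_char_two
    (m : ℕ) (hm : 3 ≤ m) (hodd : Odd m)
    (ζ : AlgebraicClosure (ZMod 2)) (hζ : IsPrimitiveRoot ζ m)
    (u' : ℕ) (hu' : IsLeast {k : ℕ | 0 < k ∧ 2 ^ k ≡ 1 [MOD m]} u')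
    (s : ℕ) (hs : 0 < s) (hsm : Nat.gcd s m = 1) :
    (Even u' ∧ (2 : ℤ) ^ (u' / 2) ≡ -1 [ZMOD (m : ℕ)] →
      (minpoly (ZMod 2) (ζ ^ s + ζ⁻¹ ^ s)).natDegree = u' / 2) ∧
    (¬(Even u' ∧ (2 : ℤ) ^ (u' / 2) ≡ -1 [ZMOD (m : ℕ)]) →
      (minpoly (ZMod 2) (ζ ^ s + ζ⁻¹ ^ s)).natDegree = u') :=
  minpoly_degree_char_two_general m ζ hζ u' hu' s hsm
end

section
/- Let p > 2 be prime, m ≥ 3 with gcd(p,m)=1, let u be the multiplicative order of p modulo 2m, let ζ be a primitive 2m-th root of unity and i a primitive 4th root of unity in an algebraic closure of 𝔽_p, and let s be coprime to m. If p ≡ 3 (mod 4) and u is odd, then the degree of the minimal polynomial of i(ζ^s + ζ^{−s}) over 𝔽_p equals 2u. -/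
/-!
Over a finite field with `q` elements, `a ^ q ^ k = a` holds exactly when `deg a ∣ k`: this is
the order of the Frobenius of `𝔽_q⟮a⟯`. Write `α = i β` with `β = x + x⁻¹`, `x = ζ ^ s`. Since
`p ≡ 3 (mod 4)`, `i ^ p ^ k = (-1) ^ k i`, so `α ^ p ^ k = (-1) ^ k i β ^ p ^ k`. As
`ζ ^ p ^ u = ζ`, `β` is fixed by `p ^ u`, hence `deg α ∣ 2u`. Conversely `β ^ p ^ j = β` forces
`x ^ p ^ (2j) = x`, so `p ^ (2j) ≡ 1 (mod 2m)` and `u ∣ 2j`; taking `j = 2 deg α` and using that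
`u` is odd gives `u ∣ deg α`. Finally `deg α ≠ u`, because `α ^ p ^ u = -α ≠ α`.
-/

open IntermediateField

theorem pow_card_pow_eq_self_iff_natDegree_minpoly_dvd {F K : Type*} [Field F] [Fintype F]
    [Field K] [Algebra F K] {a : K} (ha : IsIntegral F a) (k : ℕ) :
    a ^ Fintype.card F ^ k = a ↔ (minpoly F a).natDegree ∣ k := by
  have := adjoin.finiteDimensional ha
  have : Finite F⟮a⟯ := Module.finite_of_finite F
  have hfrob : (FiniteField.frobeniusAlgHom F F⟮a⟯ ^ k) (AdjoinSimple.gen F a) =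
      AdjoinSimple.gen F a ↔ a ^ Fintype.card F ^ k = a := by
    rw [AlgHom.coe_pow, FiniteField.coe_frobeniusAlgHom, pow_iterate, ← Subtype.val_inj]
    rfl
  rw [← adjoin.finrank ha, ← FiniteField.orderOf_frobeniusAlgHom F F⟮a⟯,
    orderOf_dvd_iff_pow_eq_one, ← hfrob]
  refine ⟨fun h => algHom_ext_of_eq_adjoin F rfl ?_, fun h => by rw [h]; rfl⟩
  rintro x rfl
  exact h

theorem eq_or_eq_inv_of_add_inv_eq_add_inv {K : Type*} [Field K] {x y : K} (hx : x ≠ 0)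
    (hy : y ≠ 0) (h : x + x⁻¹ = y + y⁻¹) : y = x ∨ y = x⁻¹ := by
  have : (y - x) * (y - x⁻¹) = 0 := by
    linear_combination -y * h + mul_inv_cancel₀ hx - mul_inv_cancel₀ hy
  rcases mul_eq_zero.mp this with h | h
  · exact .inl (sub_eq_zero.mp h)
  · exact .inr (sub_eq_zero.mp h)

theorem pow_pow_two_mul_eq_self_of_add_inv_pow_eq {K : Type*} [Field K] {p : ℕ} [ExpChar K p]
    {x : K} (hx : x ≠ 0) {j : ℕ} (h : (x + x⁻¹) ^ p ^ j = x + x⁻¹) : x ^ p ^ (2 * j) = x := by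
  rw [add_pow_expChar_pow, inv_pow] at h
  rw [two_mul, pow_add, pow_mul]
  rcases eq_or_eq_inv_of_add_inv_eq_add_inv hx (pow_ne_zero _ hx) h.symm with h | h
  · rw [h, h]
  · rw [h, inv_pow, h, inv_inv]

theorem pow_pow_eq_neg_one_pow_mul {R : Type*} [CommRing R] {y : R} {p : ℕ} (hp : Odd p)
    (hy : y ^ p = -y) (k : ℕ) : y ^ p ^ k = (-1) ^ k * y := by
  induction k with
  | zero => simp
  | succ k ih =>
    rw [pow_succ, pow_mul, ih, mul_pow, ← pow_mul, mul_comm k, pow_mul, hp.neg_one_pow, hy]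
    ring

theorem Nat.ModEq.cancel_left_of_coprime_of_modEq_two {s m a b : ℕ} (hsm : s.Coprime m)
    (h2 : a ≡ b [MOD 2]) (h : s * a ≡ s * b [MOD 2 * m]) : a ≡ b [MOD 2 * m] := by
  rcases Nat.even_or_odd s with hs | hs
  · have hm : Nat.Coprime 2 m := Nat.Coprime.coprime_dvd_left hs.two_dvd hsm
    refine (Nat.modEq_and_modEq_iff_modEq_mul hm).mp ⟨h2, ?_⟩
    exact Nat.ModEq.cancel_left_of_coprime hsm.symm (h.of_mul_left 2)
  · exact Nat.ModEq.cancel_left_of_coprime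
      ((Nat.Coprime.mul_right (Nat.coprime_two_right.mpr hs) hsm).symm) h

theorem dvd_of_isLeast_pow_modEq_one {p n u j : ℕ}
    (hu : IsLeast {k | 0 < k ∧ p ^ k ≡ 1 [MOD n]} u) (hj : p ^ j ≡ 1 [MOD n]) : u ∣ j := by
  obtain ⟨⟨hu0, hu1⟩, hmin⟩ := hu
  have hmod : p ^ (j % u) ≡ 1 [MOD n] := by
    have := (hu1.pow (j / u)).mul_right (p ^ (j % u))
    rw [← pow_mul, ← pow_add, Nat.div_add_mod, one_pow, one_mul] at this
    exact this.symm.trans hj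
  by_contra hnd
  exact absurd (hmin ⟨Nat.pos_of_ne_zero (mt Nat.dvd_of_mod_eq_zero hnd), hmod⟩)
    (not_le.mpr (Nat.mod_lt _ hu0))

theorem eq_two_mul_of_dvd_of_dvd_two_mul {a b : ℕ} (hab : a ∣ b) (hba : b ∣ 2 * a)
    (hne : b ≠ a) : b = 2 * a := by
  obtain ⟨c, rfl⟩ := hab
  have ha : a ≠ 0 := by rintro rfl; simp at hne
  rw [mul_comm 2] at hba
  rcases (Nat.dvd_prime Nat.prime_two).mp
      (Nat.dvd_of_mul_dvd_mul_left (Nat.pos_of_ne_zero ha) hba) with rfl | rfl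
  · simp at hne
  · ring

theorem add_inv_pow_pow_eq_self {K : Type*} [Field K] {p : ℕ} [ExpChar K p] {ζ : K} {k : ℕ}
    (hζ : ζ ^ p ^ k = ζ) (s : ℕ) : (ζ ^ s + (ζ ^ s)⁻¹) ^ p ^ k = ζ ^ s + (ζ ^ s)⁻¹ := by
  rw [add_pow_expChar_pow, inv_pow, ← pow_mul, mul_comm, pow_mul, hζ]

theorem IsPrimitiveRoot.add_inv_pow_ne_zero {K : Type*} [Field K] {m s : ℕ} {ζ : K}
    (hζ : IsPrimitiveRoot ζ (2 * m)) (hm : 2 < m) (hsm : s.Coprime m) :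
    ζ ^ s + (ζ ^ s)⁻¹ ≠ 0 := by
  intro h
  have hsq : (ζ ^ s) ^ 2 = -1 := by
    field_simp [pow_ne_zero s (hζ.ne_zero (by omega))] at h
    linear_combination h
  have h4 : ζ ^ (2 * (2 * s)) = 1 := by
    rw [← mul_assoc, mul_comm, pow_mul, pow_mul, hsq]
    norm_num
  have hdvd : m ∣ 2 * s :=
    Nat.dvd_of_mul_dvd_mul_left two_pos ((hζ.pow_eq_one_iff_dvd _).mp h4)
  have := Nat.le_of_dvd two_pos (hsm.symm.dvd_of_dvd_mul_right hdvd)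
  omega

theorem IsPrimitiveRoot.pow_eq_neg_of_mod_four_eq_three {R : Type*} [CommRing R] [IsDomain R]
    {i : R} (hi : IsPrimitiveRoot i 4) {n : ℕ} (hn : n % 4 = 3) : i ^ n = -i := by
  have hi2 : i ^ 2 = -1 := (hi.pow_of_dvd two_ne_zero (by norm_num)).eq_neg_one_of_two_right
  rw [← Nat.div_add_mod n 4, hn, pow_add, pow_mul, hi.pow_eq_one, one_pow, one_mul, pow_succ,
    hi2, neg_one_mul]

theorem dvd_two_mul_of_add_inv_pow_eq {K : Type*} [Field K] {p m u s j : ℕ} [ExpChar K p]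
    (hp : Odd p) (hm : m ≠ 0) (hu : IsLeast {k | 0 < k ∧ p ^ k ≡ 1 [MOD 2 * m]} u)
    {ζ : K} (hζ : IsPrimitiveRoot ζ (2 * m)) (hsm : s.Coprime m)
    (h : (ζ ^ s + (ζ ^ s)⁻¹) ^ p ^ j = ζ ^ s + (ζ ^ s)⁻¹) : u ∣ 2 * j := by
  have h2m : 2 * m ≠ 0 := by omega
  have hx := pow_pow_two_mul_eq_self_of_add_inv_pow_eq (pow_ne_zero s (hζ.ne_zero h2m)) h
  rw [← pow_mul, ← pow_one (ζ ^ s), ← pow_mul, (hζ.isOfFinOrder h2m).pow_eq_pow_iff_modEq,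
    ← hζ.eq_orderOf] at hx
  exact dvd_of_isLeast_pow_modEq_one hu
    (Nat.ModEq.cancel_left_of_coprime_of_modEq_two hsm (Nat.odd_iff.mp hp.pow) hx)

theorem minpoly_degree_odd_order_case_general
    (p m : ℕ) [Fact p.Prime] (hp2 : 2 < p) (hm : 3 ≤ m)
    (u : ℕ) (hu : IsLeast {k : ℕ | 0 < k ∧ p ^ k ≡ 1 [MOD 2 * m]} u)
    (ζ : AlgebraicClosure (ZMod p)) (hζ : IsPrimitiveRoot ζ (2 * m))
    (i : AlgebraicClosure (ZMod p)) (hi : IsPrimitiveRoot i 4)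
    (s : ℕ) (hsm : Nat.gcd s m = 1)
    (hp4 : p % 4 = 3) (huodd : Odd u) :
    (minpoly (ZMod p) (i * (ζ ^ s + ζ⁻¹ ^ s))).natDegree = 2 * u := by
  have hpodd : Odd p := (Fact.out : p.Prime).odd_of_ne_two hp2.ne'
  rw [inv_pow]
  set β := ζ ^ s + (ζ ^ s)⁻¹
  have hfrob (k : ℕ) : (i * β) ^ p ^ k = (-1) ^ k * (i * β ^ p ^ k) := by
    rw [mul_pow, pow_pow_eq_neg_one_pow_mul hpodd (hi.pow_eq_neg_of_mod_four_eq_three hp4),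
      mul_assoc]
  have hβu : β ^ p ^ u = β := by
    refine add_inv_pow_pow_eq_self ?_ s
    simpa using ((hζ.isOfFinOrder (by omega)).pow_eq_pow_iff_modEq (n := p ^ u) (m := 1)).mpr
      (hζ.eq_orderOf ▸ hu.1.2)
  have hdeg := pow_card_pow_eq_self_iff_natDegree_minpoly_dvd
    (Algebra.IsIntegral.isIntegral (R := ZMod p) (i * β))
  rw [ZMod.card] at hdeg
  set d := (minpoly (ZMod p) (i * β)).natDegree
  have hud : u ∣ d := by
    have hβd := (hdeg _).mpr (dvd_mul_left d 2)
    rw [hfrob, (even_two_mul _).neg_one_pow, one_mul] at hβd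
    have := dvd_two_mul_of_add_inv_pow_eq hpodd (by omega) hu hζ hsm
      (mul_left_cancel₀ (hi.ne_zero four_ne_zero) hβd)
    rw [← mul_assoc] at this
    exact (Nat.Coprime.pow_right 2 (Nat.coprime_two_right.mpr huodd)).dvd_of_dvd_mul_left this
  have hd2u : d ∣ 2 * u := (hdeg _).mp <| by
    rw [hfrob, (even_two_mul u).neg_one_pow, one_mul, two_mul, pow_add, pow_mul, hβu, hβu]
  have hdu : d ≠ u := fun hd => by
    have hαu := (hdeg u).mpr hd.dvd
    rw [hfrob, huodd.neg_one_pow, hβu, neg_one_mul,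
      Ring.eq_self_iff_eq_zero_of_char_ne_two (by rw [ringChar.eq _ p]; exact hp2.ne')] at hαu
    exact mul_ne_zero (hi.ne_zero four_ne_zero) (hζ.add_inv_pow_ne_zero (by omega) hsm) hαu
  exact eq_two_mul_of_dvd_of_dvd_two_mul hud hd2u hdu

theorem minpoly_degree_odd_order_case
    (p m : ℕ) [Fact p.Prime] (hp2 : 2 < p) (hm : 3 ≤ m)
    (hgcd : Nat.gcd p m = 1)
    (u : ℕ) (hu : IsLeast {k : ℕ | 0 < k ∧ p ^ k ≡ 1 [MOD 2 * m]} u)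
    (ζ : AlgebraicClosure (ZMod p)) (hζ : IsPrimitiveRoot ζ (2 * m))
    (i : AlgebraicClosure (ZMod p)) (hi : IsPrimitiveRoot i 4)
    (s : ℕ) (hs : 0 < s) (hsm : Nat.gcd s m = 1)
    (hp4 : p % 4 = 3) (huodd : Odd u) :
    (minpoly (ZMod p) (i * (ζ ^ s + ζ⁻¹ ^ s))).natDegree = 2 * u :=
  minpoly_degree_odd_order_case_general p m hp2 hm u hu ζ hζ i hi s hsm hp4 huodd
end
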